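/- arXiv:2504.12836 — 5 statements merged into one kernel-verified Lean document; each statement's English description precedes it below -/
import Mathlib

section
/- Let $1<p<\infty$ and $\Omega\subset\mathbb{R}^D$ a domain of finite measure. If $f, v \in W_0^{1,p}(\Omega)\setminus\{0\}$ satisfy $\int_\Omega |\nabla v|^{p-2}\langle\nabla v,\nabla\psi\rangle\,dx = \int_\Omega |f|^{p-2}f\,\psi\,dx$ for all $\psi\in W_0^{1,p}(\Omega)$, then $R[v]\leq R[f]$, where $R[u]=\|\nabla u\|_p^p/\|u\|_p^p$ is the Rayleigh quotient. -/
open MeasureTheory Real Filter Topology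
open scoped RealInnerProductSpace ENNReal

noncomputable section

/-- An element of `W_0^{1,p}(Ω)`: a function together with its weak gradient,
vanishing outside `Ω` (zero Dirichlet boundary values), `L^p`-integrability of the
function and of its gradient, and the weak-gradient identity against smooth
compactly supported test functions. -/
structure W1p0 (D : ℕ) (Ω : Set (EuclideanSpace ℝ (Fin D))) (p : ℝ) where
  toFun : EuclideanSpace ℝ (Fin D) → ℝ
  grad : EuclideanSpace ℝ (Fin D) → EuclideanSpace ℝ (Fin D)
  zero_outside : ∀ x ∉ Ω, toFun x = 0
  memLp_fun : MemLp toFun (ENNReal.ofReal p) volume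
  memLp_grad : MemLp (fun x => ‖grad x‖) (ENNReal.ofReal p) volume
  weak_grad : ∀ φ : EuclideanSpace ℝ (Fin D) → ℝ, ContDiff ℝ (⊤ : ℕ∞) φ → HasCompactSupport φ →
    ∀ y, ∫ x, toFun x * fderiv ℝ φ x y = - ∫ x, φ x * ⟪grad x, y⟫

namespace W1p0
variable {D : ℕ} {Ω : Set (EuclideanSpace ℝ (Fin D))} {p : ℝ}

/-- `u` is nonzero as an element of `L^p(Ω)`. -/
def Nonzero (u : W1p0 D Ω p) : Prop := ¬ (u.toFun =ᵐ[volume.restrict Ω] 0)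

/-- The Rayleigh quotient `R[u] = ‖∇u‖_p^p / ‖u‖_p^p`. -/
def R (u : W1p0 D Ω p) : ℝ :=
  (∫ x in Ω, ‖u.grad x‖ ^ p) / (∫ x in Ω, |u.toFun x| ^ p)

/-- The positive part `u⁺ = max {u, 0}`. -/
def posPart (u : W1p0 D Ω p) : EuclideanSpace ℝ (Fin D) → ℝ := fun x => max (u.toFun x) 0

/-- The negative part `u⁻ = max {-u, 0}`. -/
def negPart (u : W1p0 D Ω p) : EuclideanSpace ℝ (Fin D) → ℝ := fun x => max (-u.toFun x) 0

/-- The gradient of the positive part: `∇u⁺ = 1_{u>0} ∇u`. -/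
def gradPos (u : W1p0 D Ω p) : EuclideanSpace ℝ (Fin D) → EuclideanSpace ℝ (Fin D) :=
  fun x => if 0 < u.toFun x then u.grad x else 0

/-- The gradient of the negative part: `∇u⁻ = -1_{u<0} ∇u` (up to sign). -/
def gradNeg (u : W1p0 D Ω p) : EuclideanSpace ℝ (Fin D) → EuclideanSpace ℝ (Fin D) :=
  fun x => if u.toFun x < 0 then u.grad x else 0

/-- The Rayleigh quotient of the positive part, `R⁺[u] = R[u⁺]`. -/
def Rpos (u : W1p0 D Ω p) : ℝ :=
  (∫ x in Ω, ‖u.gradPos x‖ ^ p) / (∫ x in Ω, u.posPart x ^ p)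

/-- The Rayleigh quotient of the negative part, `R⁻[u] = R[u⁻]`. -/
def Rneg (u : W1p0 D Ω p) : ℝ :=
  (∫ x in Ω, ‖u.gradNeg x‖ ^ p) / (∫ x in Ω, u.negPart x ^ p)

/-- The positive part of `u` is nontrivial. -/
def PosNonzero (u : W1p0 D Ω p) : Prop := ¬ (u.posPart =ᵐ[volume.restrict Ω] 0)

/-- The negative part of `u` is nontrivial. -/
def NegNonzero (u : W1p0 D Ω p) : Prop := ¬ (u.negPart =ᵐ[volume.restrict Ω] 0)

/-- `v` weakly solves the `p`-Poisson problem `-Δ_p v = g` with zero Dirichlet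
boundary conditions: for every test function `ψ ∈ W_0^{1,p}(Ω)`,
`∫_Ω |∇v|^{p-2} ⟨∇v, ∇ψ⟩ = ∫_Ω g ψ`. -/
def IsWeakSol (v : W1p0 D Ω p) (g : EuclideanSpace ℝ (Fin D) → ℝ) : Prop :=
  ∀ ψ : W1p0 D Ω p,
    ∫ x in Ω, ‖v.grad x‖ ^ (p - 2) * ⟪v.grad x, ψ.grad x⟫ = ∫ x in Ω, g x * ψ.toFun x

/-- `u` is an eigenfunction of the Dirichlet `p`-Laplacian on `Ω` with eigenvalue `lam`. -/
def IsEigen (u : W1p0 D Ω p) (lam : ℝ) : Prop :=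
  u.Nonzero ∧ ∀ ψ : W1p0 D Ω p,
    ∫ x in Ω, ‖u.grad x‖ ^ (p - 2) * ⟪u.grad x, ψ.grad x⟫
      = lam * ∫ x in Ω, |u.toFun x| ^ (p - 2) * u.toFun x * ψ.toFun x

end W1p0

/-- The first Dirichlet eigenvalue `λ₁(Ω,p) = inf R[u]` over nonzero `u ∈ W_0^{1,p}(Ω)`. -/
def lambda1 (D : ℕ) (Ω : Set (EuclideanSpace ℝ (Fin D))) (p : ℝ) : ℝ :=
  sInf {r | ∃ u : W1p0 D Ω p, u.Nonzero ∧ r = u.R}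

/-- The variational characterization of the second eigenvalue:
`λ₂(Ω,p) = inf max {R[u⁺], R[u⁻]}` over sign-changing `u ∈ W_0^{1,p}(Ω)`. -/
def lambda2 (D : ℕ) (Ω : Set (EuclideanSpace ℝ (Fin D))) (p : ℝ) : ℝ :=
  sInf {r | ∃ u : W1p0 D Ω p, u.PosNonzero ∧ u.NegNonzero ∧ r = max u.Rpos u.Rneg}

private lemma rpow_sub_one_mul {t : ℝ} (ht : 0 ≤ t) {r : ℝ} (hr : r ≠ 0) :
    t ^ (r - 1) * t = t ^ r := by
  rcases ht.eq_or_lt with h | h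
  · simp [← h, Real.zero_rpow hr]
  · calc t ^ (r - 1) * t = t ^ (r - 1) * t ^ (1 : ℝ) := by rw [Real.rpow_one]
      _ = t ^ (r - 1 + 1) := (Real.rpow_add h _ _).symm
      _ = t ^ r := by ring_nf

private lemma integral_abs_rpow_pos {D : ℕ} {Ω : Set (EuclideanSpace ℝ (Fin D))} {p : ℝ}
    (hp0 : 0 < p) (u : W1p0 D Ω p) (hu : u.Nonzero) :
    0 < ∫ x in Ω, |u.toFun x| ^ p := by
  have hint : Integrable (fun x => |u.toFun x| ^ p) (volume.restrict Ω) := by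
    have h := (u.memLp_fun.restrict Ω).integrable_norm_rpow
      (by simp [ENNReal.ofReal_eq_zero, hp0.not_ge]) (by simp)
    simpa [Real.norm_eq_abs, ENNReal.toReal_ofReal hp0.le] using h
  refine lt_of_le_of_ne (integral_nonneg fun x => Real.rpow_nonneg (abs_nonneg _) _) (Ne.symm ?_)
  intro h0
  apply hu
  have h := (integral_eq_zero_iff_of_nonneg
    (fun x => Real.rpow_nonneg (abs_nonneg _) _) hint).mp h0
  filter_upwards [h] with x hx
  have hx' : |u.toFun x| ^ p = 0 := hx
  exact abs_eq_zero.mp ((Real.rpow_eq_zero (abs_nonneg _) hp0.ne').mp hx')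

private lemma integrable_mul_of_memLp {α : Type*} [MeasurableSpace α] {μ : Measure α} {p q : ℝ}
    (hpq : Real.HolderConjugate q p) {F G : α → ℝ}
    (hF : MemLp F (ENNReal.ofReal q) μ) (hG : MemLp G (ENNReal.ofReal p) μ) :
    Integrable (fun x => F x * G x) μ := by
  rw [← memLp_one_iff_integrable]
  have := hpq.ennrealOfReal
  have h := hG.smul hF (r := 1)
  exact h


/-- If `v ∈ W_0^{1,p}(Ω) \ {0}` weakly solves `-Δ_p v = |f|^{p-2} f` for
`f ∈ W_0^{1,p}(Ω) \ {0}`, then `R[v] ≤ R[f]`. -/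
theorem rayleigh_monotone {D : ℕ} (p : ℝ) (hp : 1 < p)
    (Ω : Set (EuclideanSpace ℝ (Fin D))) (hΩopen : IsOpen Ω) (hΩconn : IsConnected Ω)
    (hΩfin : volume Ω < ⊤)
    (f v : W1p0 D Ω p) (hf : f.Nonzero) (hv : v.Nonzero)
    (hsol : v.IsWeakSol (fun x => |f.toFun x| ^ (p - 2) * f.toFun x)) :
    v.R ≤ f.R := by
  have hp0 : (0:ℝ) < p := zero_lt_one.trans hp
  have hp1 : (0:ℝ) < p - 1 := sub_pos.2 hp
  set q : ℝ := p / (p - 1) with hqdef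
  have hq : p.HolderConjugate q := Real.HolderConjugate.conjExponent hp
  have hqinv : (q:ℝ)⁻¹ + p⁻¹ = 1 := by have := hq.inv_add_inv_eq_one; linarith
  -- pointwise identities
  have pwv : ∀ x, ‖v.grad x‖ ^ (p - 2) * ⟪v.grad x, v.grad x⟫ = ‖v.grad x‖ ^ p := by
    intro x
    rw [real_inner_self_eq_norm_mul_norm, ← mul_assoc,
      show p - 2 = (p - 1) - 1 by ring, rpow_sub_one_mul (norm_nonneg _) hp1.ne',
      rpow_sub_one_mul (norm_nonneg _) hp0.ne']
  have pwf3 : ∀ x, |f.toFun x| ^ (p - 2) * f.toFun x * f.toFun x = |f.toFun x| ^ p := by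
    intro x
    rw [mul_assoc, ← abs_mul_abs_self (f.toFun x), ← mul_assoc,
      show p - 2 = (p - 1) - 1 by ring, rpow_sub_one_mul (abs_nonneg _) hp1.ne',
      rpow_sub_one_mul (abs_nonneg _) hp0.ne']
  have pwabs : ∀ x, |(|f.toFun x| ^ (p - 2) * f.toFun x) * v.toFun x|
      = |f.toFun x| ^ (p - 1) * |v.toFun x| := by
    intro x
    rw [abs_mul, abs_mul, abs_of_nonneg (Real.rpow_nonneg (abs_nonneg _) _),
      show p - 2 = (p - 1) - 1 by ring, rpow_sub_one_mul (abs_nonneg _) hp1.ne']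
  have pwineq : ∀ x, |‖v.grad x‖ ^ (p - 2) * ⟪v.grad x, f.grad x⟫|
      ≤ ‖v.grad x‖ ^ (p - 1) * ‖f.grad x‖ := by
    intro x
    rw [abs_mul, abs_of_nonneg (Real.rpow_nonneg (norm_nonneg _) _)]
    calc ‖v.grad x‖ ^ (p - 2) * |⟪v.grad x, f.grad x⟫|
        ≤ ‖v.grad x‖ ^ (p - 2) * (‖v.grad x‖ * ‖f.grad x‖) :=
          mul_le_mul_of_nonneg_left (abs_real_inner_le_norm _ _)
            (Real.rpow_nonneg (norm_nonneg _) _)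
      _ = ‖v.grad x‖ ^ (p - 1) * ‖f.grad x‖ := by
          rw [← mul_assoc, show p - 2 = (p - 1) - 1 by ring,
            rpow_sub_one_mul (norm_nonneg _) hp1.ne']
  have pwqf : ∀ x : EuclideanSpace ℝ (Fin D), (|f.toFun x| ^ (p - 1)) ^ q = |f.toFun x| ^ p := by
    intro x
    rw [← Real.rpow_mul (abs_nonneg _), hq.sub_one_mul_conj]
  have pwqv : ∀ x : EuclideanSpace ℝ (Fin D), (‖v.grad x‖ ^ (p - 1)) ^ q = ‖v.grad x‖ ^ p := by
    intro x
    rw [← Real.rpow_mul (norm_nonneg _), hq.sub_one_mul_conj]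
  -- MemLp facts
  have mFq : MemLp (fun x => |f.toFun x| ^ (p - 1)) (ENNReal.ofReal q) (volume.restrict Ω) := by
    have h := (f.memLp_fun.restrict Ω).norm_rpow_div (ENNReal.ofReal (p - 1))
    rw [← ENNReal.ofReal_div_of_pos hp1, ← hqdef] at h
    simpa [Real.norm_eq_abs, ENNReal.toReal_ofReal hp1.le] using h
  have mVabs : MemLp (fun x => |v.toFun x|) (ENNReal.ofReal p) (volume.restrict Ω) := by
    simpa [Real.norm_eq_abs] using (v.memLp_fun.restrict Ω).norm
  have mGVq : MemLp (fun x => ‖v.grad x‖ ^ (p - 1)) (ENNReal.ofReal q) (volume.restrict Ω) := by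
    have h := (v.memLp_grad.restrict Ω).norm_rpow_div (ENNReal.ofReal (p - 1))
    rw [← ENNReal.ofReal_div_of_pos hp1, ← hqdef] at h
    simpa [ENNReal.toReal_ofReal hp1.le] using h
  have mGF : MemLp (fun x => ‖f.grad x‖) (ENNReal.ofReal p) (volume.restrict Ω) :=
    f.memLp_grad.restrict Ω
  -- first inequality: ∫‖∇v‖^p ≤ (∫|f|^p)^(1/q) * (∫|v|^p)^(1/p)
  have h1 : (∫ x in Ω, ‖v.grad x‖ ^ p)
      ≤ (∫ x in Ω, |f.toFun x| ^ p) ^ (q⁻¹) * (∫ x in Ω, |v.toFun x| ^ p) ^ (p⁻¹) := by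
    have hH := integral_mul_le_Lp_mul_Lq_of_nonneg hq.symm
      (Filter.Eventually.of_forall fun x => Real.rpow_nonneg (abs_nonneg _) _)
      (Filter.Eventually.of_forall fun x => abs_nonneg _) mFq mVabs
    simp only [pwqf, one_div] at hH
    calc (∫ x in Ω, ‖v.grad x‖ ^ p)
        = ∫ x in Ω, (|f.toFun x| ^ (p - 2) * f.toFun x) * v.toFun x := by
          rw [integral_congr_ae (Filter.Eventually.of_forall fun x => (pwv x).symm)]
          exact hsol v
      _ ≤ |∫ x in Ω, (|f.toFun x| ^ (p - 2) * f.toFun x) * v.toFun x| := le_abs_self _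
      _ ≤ ∫ x in Ω, |(|f.toFun x| ^ (p - 2) * f.toFun x) * v.toFun x| := by
          have h := norm_integral_le_integral_norm (μ := volume.restrict Ω)
              (fun x => (|f.toFun x| ^ (p - 2) * f.toFun x) * v.toFun x)
          simp only [Real.norm_eq_abs] at h
          exact h
      _ = ∫ x in Ω, |f.toFun x| ^ (p - 1) * |v.toFun x| :=
          integral_congr_ae (Filter.Eventually.of_forall pwabs)
      _ ≤ _ := hH
  -- second inequality: ∫|f|^p ≤ (∫‖∇v‖^p)^(1/q) * (∫‖∇f‖^p)^(1/p)
  have h2 : (∫ x in Ω, |f.toFun x| ^ p)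
      ≤ (∫ x in Ω, ‖v.grad x‖ ^ p) ^ (q⁻¹) * (∫ x in Ω, ‖f.grad x‖ ^ p) ^ (p⁻¹) := by
    have hdom : Integrable (fun x => ‖v.grad x‖ ^ (p - 1) * ‖f.grad x‖) (volume.restrict Ω) :=
      integrable_mul_of_memLp hq.symm mGVq mGF
    have hH := integral_mul_le_Lp_mul_Lq_of_nonneg hq.symm
      (Filter.Eventually.of_forall fun x => Real.rpow_nonneg (norm_nonneg _) _)
      (Filter.Eventually.of_forall fun x => norm_nonneg _) mGVq mGF
    simp only [pwqv, one_div] at hH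
    calc (∫ x in Ω, |f.toFun x| ^ p)
        = ∫ x in Ω, |f.toFun x| ^ (p - 2) * f.toFun x * f.toFun x :=
          integral_congr_ae (Filter.Eventually.of_forall fun x => (pwf3 x).symm)
      _ = ∫ x in Ω, ‖v.grad x‖ ^ (p - 2) * ⟪v.grad x, f.grad x⟫ := (hsol f).symm
      _ ≤ |∫ x in Ω, ‖v.grad x‖ ^ (p - 2) * ⟪v.grad x, f.grad x⟫| := le_abs_self _
      _ ≤ ∫ x in Ω, |‖v.grad x‖ ^ (p - 2) * ⟪v.grad x, f.grad x⟫| := by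
          have h := norm_integral_le_integral_norm (μ := volume.restrict Ω)
              (fun x => ‖v.grad x‖ ^ (p - 2) * ⟪v.grad x, f.grad x⟫)
          simp only [Real.norm_eq_abs] at h
          exact h
      _ ≤ ∫ x in Ω, ‖v.grad x‖ ^ (p - 1) * ‖f.grad x‖ :=
          integral_mono_of_nonneg (Filter.Eventually.of_forall fun x => abs_nonneg _) hdom
            (Filter.Eventually.of_forall pwineq)
      _ ≤ _ := hH
  -- positivity
  have hNF : 0 < ∫ x in Ω, |f.toFun x| ^ p := integral_abs_rpow_pos hp0 f hf
  have hNV : 0 < ∫ x in Ω, |v.toFun x| ^ p := integral_abs_rpow_pos hp0 v hv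
  have hGVnn : 0 ≤ ∫ x in Ω, ‖v.grad x‖ ^ p :=
    integral_nonneg fun x => Real.rpow_nonneg (norm_nonneg _) _
  have hGFnn : 0 ≤ ∫ x in Ω, ‖f.grad x‖ ^ p :=
    integral_nonneg fun x => Real.rpow_nonneg (norm_nonneg _) _
  simp only [W1p0.R]
  set A := ∫ x in Ω, ‖v.grad x‖ ^ p with hA
  set B := ∫ x in Ω, |v.toFun x| ^ p with hB
  set C := ∫ x in Ω, ‖f.grad x‖ ^ p with hC
  set E := ∫ x in Ω, |f.toFun x| ^ p with hE
  have hApos : 0 < A := by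
    rcases hGVnn.eq_or_lt with h | h
    · exfalso
      rw [← h, Real.zero_rpow (inv_ne_zero hq.symm.pos.ne'), zero_mul] at h2
      linarith
    · exact h
  have eA : A ^ (q⁻¹) * A ^ (p⁻¹) = A := by
    rw [← Real.rpow_add hApos, hqinv, Real.rpow_one]
  have eE : E ^ (q⁻¹) * E ^ (p⁻¹) = E := by
    rw [← Real.rpow_add hNF, hqinv, Real.rpow_one]
  have hmul : A * E ≤ (E ^ (q⁻¹) * B ^ (p⁻¹)) * (A ^ (q⁻¹) * C ^ (p⁻¹)) :=
    mul_le_mul h1 h2 hNF.le (by positivity)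
  have hc : 0 < A ^ (q⁻¹) * E ^ (q⁻¹) := by positivity
  have key : A ^ (p⁻¹) * E ^ (p⁻¹) ≤ B ^ (p⁻¹) * C ^ (p⁻¹) := by
    rw [← mul_le_mul_iff_right₀ hc]
    calc A ^ (q⁻¹) * E ^ (q⁻¹) * (A ^ (p⁻¹) * E ^ (p⁻¹)) = A * E := by
          rw [show A ^ (q⁻¹) * E ^ (q⁻¹) * (A ^ (p⁻¹) * E ^ (p⁻¹))
              = (A ^ (q⁻¹) * A ^ (p⁻¹)) * (E ^ (q⁻¹) * E ^ (p⁻¹)) from by ring, eA, eE]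
      _ ≤ (E ^ (q⁻¹) * B ^ (p⁻¹)) * (A ^ (q⁻¹) * C ^ (p⁻¹)) := hmul
      _ = A ^ (q⁻¹) * E ^ (q⁻¹) * (B ^ (p⁻¹) * C ^ (p⁻¹)) := by ring
  have final : A * E ≤ B * C := by
    have h := Real.rpow_le_rpow (by positivity) key hp0.le
    rw [Real.mul_rpow (by positivity) (by positivity),
      Real.mul_rpow (by positivity) (by positivity),
      Real.rpow_inv_rpow hGVnn hp0.ne', Real.rpow_inv_rpow hNF.le hp0.ne',
      Real.rpow_inv_rpow hNV.le hp0.ne', Real.rpow_inv_rpow hGFnn hp0.ne'] at h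
    exact h
  rw [div_le_div_iff₀ hNV hNF]
  calc A * E ≤ B * C := final
    _ = C * B := by ring
end
end

section
/- For all $a,b\in\mathbb{R}^D$ and $1<p\leq 2$, one has $(1+|a|^2+|b|^2)^{(2-p)/2}\,\langle |a|^{p-2}a - |b|^{p-2}b,\ a-b\rangle \geq (p-1)\,|a-b|^2$. -/
open scoped RealInnerProductSpace

-- Step 2: M^((2-p)/2) * α^(p-2) ≥ 1 when 0 < α, α² ≤ M
private lemma step2 {p M α : ℝ} (hp₂ : p ≤ 2) (hα : 0 < α) (hM : α ^ 2 ≤ M) :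
    1 ≤ M ^ ((2 - p) / 2) * α ^ (p - 2) := by
  have hM0 : (0:ℝ) < M := lt_of_lt_of_le (by positivity) hM
  have h1 : (α ^ 2 : ℝ) ^ ((2 - p) / 2) = α ^ (2 - p) := by
    rw [← Real.rpow_natCast α 2, ← Real.rpow_mul hα.le]
    congr 1; ring
  have h2 : (α ^ 2 : ℝ) ^ ((2 - p) / 2) ≤ M ^ ((2 - p) / 2) :=
    Real.rpow_le_rpow (by positivity) hM (by linarith)
  have h3 : α ^ (2 - p) * α ^ (p - 2) = 1 := by
    rw [← Real.rpow_add hα]; norm_num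
  have h4 : (0:ℝ) ≤ α ^ (p - 2) := Real.rpow_nonneg hα.le _
  nlinarith [h2, h1, h3, h4]

-- tangent line inequality from concavity of x ^ (p-1)
private lemma tangent {p α β : ℝ} (hp₁ : 1 < p) (hp₂ : p ≤ 2) (hβ : 0 ≤ β) (hβα : β ≤ α) :
    (p - 1) * α ^ (p - 2) * (α - β) ≤ α ^ (p - 1) - β ^ (p - 1) := by
  rcases eq_or_lt_of_le (hβ.trans hβα) with h0 | hα
  · have hA : α = 0 := h0.symm
    have hB : β = 0 := le_antisymm (hβα.trans_eq hA) hβ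
    simp [hA, hB]
  · have hs : (-1:ℝ) ≤ β / α - 1 := by
      have : 0 ≤ β / α := div_nonneg hβ hα.le
      linarith
    have hb := rpow_one_add_le_one_add_mul_self hs (by linarith : (0:ℝ) ≤ p - 1)
      (by linarith : p - 1 ≤ 1)
    -- (1 + (β/α - 1)) ^ (p-1) ≤ 1 + (p-1) * (β/α - 1)
    rw [show (1:ℝ) + (β / α - 1) = β / α by ring] at hb
    have hdiv : (β / α) ^ (p - 1) = β ^ (p - 1) / α ^ (p - 1) := Real.div_rpow hβ hα.le _
    rw [hdiv] at hb
    have hαp1 : (0:ℝ) < α ^ (p - 1) := Real.rpow_pos_of_pos hα _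
    have key := mul_le_mul_of_nonneg_left hb hαp1.le
    -- α^(p-1) * (β^(p-1)/α^(p-1)) = β^(p-1)
    rw [mul_div_cancel₀ _ (ne_of_gt hαp1)] at key
    have e1 : α ^ (p - 1) = α ^ (p - 2) * α := by
      rw [← Real.rpow_add_one (ne_of_gt hα)]; ring_nf
    have e2 : α ^ (p - 1) * (β / α) = α ^ (p - 2) * β := by
      rw [e1]; field_simp
    nlinarith [key, e1, e2]

-- lemma 1 : same-direction endpoint, for β ≤ α
private lemma lem1 {p α β : ℝ} (hp₁ : 1 < p) (hp₂ : p ≤ 2) (hβ : 0 ≤ β) (hβα : β ≤ α) :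
    (p - 1) * (α - β) ≤ (1 + α ^ 2 + β ^ 2) ^ ((2 - p) / 2) * (α ^ (p - 1) - β ^ (p - 1)) := by
  rcases eq_or_lt_of_le (hβ.trans hβα) with h0 | hα
  · have hA : α = 0 := h0.symm
    have hB : β = 0 := le_antisymm (hβα.trans_eq hA) hβ
    simp [hA, hB]
  · set M := 1 + α ^ 2 + β ^ 2 with hMdef
    have hc : (0:ℝ) < M ^ ((2 - p) / 2) := Real.rpow_pos_of_pos (by positivity) _
    have h2 := step2 hp₂ hα (show α ^ 2 ≤ M by nlinarith [sq_nonneg β])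
    have h1 := tangent hp₁ hp₂ hβ hβα
    have t1 := mul_le_mul_of_nonneg_left h1 hc.le
    nlinarith [t1, h2, mul_nonneg (mul_nonneg (by linarith : (0:ℝ) ≤ p - 1)
      (by linarith : (0:ℝ) ≤ α - β)) (sub_nonneg.2 h2)]

-- single-term lemma for opposite-direction endpoint
private lemma lem2aux {p M α : ℝ} (hp₁ : 1 < p) (hp₂ : p ≤ 2) (hα : 0 ≤ α) (hM : α ^ 2 ≤ M)
    (hM0 : 0 < M) : (p - 1) * α ≤ M ^ ((2 - p) / 2) * α ^ (p - 1) := by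
  rcases eq_or_lt_of_le hα with h0 | hα'
  · simp [← h0, Real.zero_rpow (by linarith : p - 1 ≠ 0)]
  · have h2 := step2 hp₂ hα' hM
    have e1 : α ^ (p - 1) = α ^ (p - 2) * α := by
      rw [← Real.rpow_add_one (ne_of_gt hα')]; ring_nf
    have hc : (0:ℝ) < M ^ ((2 - p) / 2) := Real.rpow_pos_of_pos hM0 _
    nlinarith [h2, e1, hα']

-- key scalar lemma
private lemma key {p α β s : ℝ} (hp₁ : 1 < p) (hp₂ : p ≤ 2) (hα : 0 ≤ α) (hβ : 0 ≤ β)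
    (hs1 : -(α * β) ≤ s) (hs2 : s ≤ α * β) :
    (p - 1) * (α ^ 2 + β ^ 2 - 2 * s) ≤
      (1 + α ^ 2 + β ^ 2) ^ ((2 - p) / 2) *
        (α ^ (p - 2) * α ^ 2 + β ^ (p - 2) * β ^ 2 - (α ^ (p - 2) + β ^ (p - 2)) * s) := by
  set M := 1 + α ^ 2 + β ^ 2 with hMdef
  set c := M ^ ((2 - p) / 2) with hcdef
  set x := α ^ (p - 2) with hxdef
  set y := β ^ (p - 2) with hydef
  have hxα : x * α = α ^ (p - 1) := by
    rcases eq_or_lt_of_le hα with h0 | hα'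
    · simp [hxdef, ← h0, Real.zero_rpow (by linarith : p - 1 ≠ 0)]
    · rw [hxdef, ← Real.rpow_add_one (ne_of_gt hα')]; ring_nf
  have hyβ : y * β = β ^ (p - 1) := by
    rcases eq_or_lt_of_le hβ with h0 | hβ'
    · simp [hydef, ← h0, Real.zero_rpow (by linarith : p - 1 ≠ 0)]
    · rw [hydef, ← Real.rpow_add_one (ne_of_gt hβ')]; ring_nf
  -- endpoint E₊ : c * (x*α - y*β) * (α - β) ≥ (p-1) * (α-β)^2
  have Eplus : (p - 1) * (α - β) ^ 2 ≤ c * ((x * α - y * β) * (α - β)) := by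
    rcases le_total β α with h | h
    · have := lem1 hp₁ hp₂ hβ h
      rw [← hxα, ← hyβ] at this
      have := mul_le_mul_of_nonneg_right this (by linarith : (0:ℝ) ≤ α - β)
      nlinarith [this]
    · have := lem1 hp₁ hp₂ hα h
      rw [← hxα, ← hyβ] at this
      have hsym : (1 + β ^ 2 + α ^ 2) ^ ((2 - p) / 2) = c := by
        rw [hcdef, hMdef]; ring_nf
      rw [hsym] at this
      have := mul_le_mul_of_nonneg_right this (by linarith : (0:ℝ) ≤ β - α)
      nlinarith [this]
  -- endpoint E₋ : c * (x*α + y*β) * (α + β) ≥ (p-1) * (α+β)^2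
  have Eminus : (p - 1) * (α + β) ^ 2 ≤ c * ((x * α + y * β) * (α + β)) := by
    have hM0 : (0:ℝ) < M := by positivity
    have h1 := lem2aux hp₁ hp₂ hα (show α ^ 2 ≤ M by nlinarith [sq_nonneg β]) hM0
    have h2 := lem2aux hp₁ hp₂ hβ (show β ^ 2 ≤ M by nlinarith [sq_nonneg α]) hM0
    rw [← hxα] at h1
    rw [← hyβ] at h2
    rw [← hcdef] at h1 h2
    have hsum : (p - 1) * (α + β) ≤ c * (x * α + y * β) := by linarith [h1, h2]
    have := mul_le_mul_of_nonneg_right hsum (by linarith : (0:ℝ) ≤ α + β)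
    nlinarith [this]
  -- affine interpolation in s
  rcases le_or_gt 0 (c * (x + y) - 2 * (p - 1)) with h | h
  · nlinarith [Eplus, mul_nonneg h (sub_nonneg.2 hs2)]
  · nlinarith [Eminus, mul_nonneg (le_of_lt (neg_pos.2 h)) (by linarith : (0:ℝ) ≤ s + α * β)]

/-- Monotonicity of the `p`-Laplace vector field for `1 < p ≤ 2`:
`(1+|a|²+|b|²)^{(2-p)/2} ⟨|a|^{p-2}a - |b|^{p-2}b, a - b⟩ ≥ (p-1)|a-b|²`. -/
theorem plaplace_monotonicity_p_le_two {D : ℕ} (p : ℝ) (hp₁ : 1 < p) (hp₂ : p ≤ 2)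
    (a b : EuclideanSpace ℝ (Fin D)) :
    (p - 1) * ‖a - b‖ ^ (2:ℝ) ≤
      (1 + ‖a‖ ^ (2:ℝ) + ‖b‖ ^ (2:ℝ)) ^ ((2 - p) / 2) *
        ⟪‖a‖ ^ (p - 2) • a - ‖b‖ ^ (p - 2) • b, a - b⟫ := by
  have hr : ∀ t : ℝ, 0 ≤ t → t ^ (2:ℝ) = t ^ 2 := fun t ht => by
    rw [← Real.rpow_natCast t 2]; norm_num
  rw [hr _ (norm_nonneg _), hr _ (norm_nonneg _), hr _ (norm_nonneg _)]
  have hip : ⟪‖a‖ ^ (p - 2) • a - ‖b‖ ^ (p - 2) • b, a - b⟫ =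
      ‖a‖ ^ (p - 2) * ‖a‖ ^ 2 + ‖b‖ ^ (p - 2) * ‖b‖ ^ 2
        - (‖a‖ ^ (p - 2) + ‖b‖ ^ (p - 2)) * ⟪a, b⟫ := by
    simp only [inner_sub_left, inner_sub_right, real_inner_smul_left,
      real_inner_self_eq_norm_sq]
    rw [real_inner_comm b a]
    ring
  rw [hip]
  have hnsq : ‖a - b‖ ^ 2 = ‖a‖ ^ 2 + ‖b‖ ^ 2 - 2 * ⟪a, b⟫ := by
    rw [@norm_sub_sq_real]; ring
  rw [hnsq]
  have hcs := abs_real_inner_le_norm a b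
  exact key hp₁ hp₂ (norm_nonneg a) (norm_nonneg b)
    (neg_le_of_abs_le hcs) (le_of_abs_le hcs)
end

section
/- Define a real sequence by $x_0=0$, $x_{k+1}=x_k+\sigma_{k+1}/(k+1)$, where $\sigma_0=\sigma_1=1$ and for $k\geq 1$: $\sigma_{k+1}=1$ if $x_k<0$, $\sigma_{k+1}=-1$ if $x_k>1$, and $\sigma_{k+1}=\sigma_k$ if $0\leq x_k\leq 1$. Then: (a) the sequence $\{x_k\}$ is bounded; (b) every convergent subsequence $\{x_{k_n}\}$ has the property that $\{x_{k_n+1}\}$ converges to the same limit; (c) the sequence $\{x_k\}$ does not converge. -/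
open Filter Topology

/-- The counterexample sequence: `x₀ = 0`, `x_{k+1} = x_k + σ_{k+1}/(k+1)` with
`σ₀ = σ₁ = 1` and, for `k ≥ 1`, `σ_{k+1} = 1` if `x_k < 0`, `σ_{k+1} = -1` if
`x_k > 1`, and `σ_{k+1} = σ_k` otherwise. Then: (a) `{x_k}` is bounded;
(b) the shift of every convergent subsequence converges to the same limit;
(c) `{x_k}` does not converge. -/
theorem counterexample_sequence (x σ : ℕ → ℝ)
    (hx0 : x 0 = 0) (hσ0 : σ 0 = 1) (hσ1 : σ 1 = 1)
    (hrec : ∀ k, x (k + 1) = x k + σ (k + 1) / ((k : ℝ) + 1))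
    (hσ : ∀ k, 1 ≤ k →
      σ (k + 1) = if x k < 0 then 1 else if x k > 1 then -1 else σ k) :
    (∃ C : ℝ, ∀ k, |x k| ≤ C) ∧
    (∀ (k : ℕ → ℕ) (L : ℝ), StrictMono k →
      Tendsto (fun n => x (k n)) atTop (nhds L) →
      Tendsto (fun n => x (k n + 1)) atTop (nhds L)) ∧
    ¬ ∃ L : ℝ, Tendsto x atTop (nhds L) := by
  -- σ takes values ±1
  have hσval : ∀ k, σ k = 1 ∨ σ k = -1 := by
    intro k
    induction k using Nat.twoStepInduction with
    | zero => left; exact hσ0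
    | one => left; exact hσ1
    | more k ih ih1 =>
      rw [hσ (k + 1) (by omega)]
      split_ifs with h1 h2
      · left; rfl
      · right; rfl
      · exact ih1
  have hB : ∀ k, 1 ≤ k → σ (k + 1) = 1 → x k ≤ 1 := by
    intro k hk h1
    rw [hσ k hk] at h1
    split_ifs at h1 with ha hb
    · linarith
    · norm_num at h1
    · exact not_lt.mp hb
  have hC : ∀ k, 1 ≤ k → σ (k + 1) = -1 → 0 ≤ x k := by
    intro k hk h1
    rw [hσ k hk] at h1
    split_ifs at h1 with ha hb
    · norm_num at h1
    · linarith
    · exact not_lt.mp ha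
  have hx1 : x 1 = 1 := by
    have := hrec 0
    rw [hx0, hσ1] at this
    norm_num at this
    exact this
  -- boundedness invariant
  have hbound : ∀ k, -1 ≤ x k ∧ x k ≤ 2 := by
    intro k
    induction k using Nat.twoStepInduction with
    | zero => rw [hx0]; norm_num
    | one => rw [hx1]; norm_num
    | more k ih ih1 =>
      have hr := hrec (k + 1)
      push_cast at hr
      have h0 : (0:ℝ) < 1 / ((k:ℝ) + 1 + 1) := by positivity
      have h1 : 1 / ((k:ℝ) + 1 + 1) ≤ 1 := by
        rw [div_le_one (by positivity)]; linarith
      rcases hσval (k + 2) with h | h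
      · have hx1' : x (k + 1) ≤ 1 := hB (k + 1) (by omega) h
        rw [show k + 1 + 1 = k + 2 from rfl, h] at hr
        constructor <;> [linarith [ih1.1]; linarith]
      · have hx0' : 0 ≤ x (k + 1) := hC (k + 1) (by omega) h
        rw [show k + 1 + 1 = k + 2 from rfl, h, neg_div] at hr
        constructor <;> [linarith; linarith [ih1.2]]
  refine ⟨⟨2, fun k => abs_le.mpr ⟨by linarith [(hbound k).1], (hbound k).2⟩⟩, ?_, ?_⟩
  · -- part (b)
    intro k L hk hconv
    have hdiff : Tendsto (fun n => σ (k n + 1) / ((k n : ℝ) + 1)) atTop (nhds 0) := by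
      refine squeeze_zero_norm (a := fun n : ℕ => 1 / ((n : ℝ) + 1)) (fun n => ?_)
        tendsto_one_div_add_atTop_nhds_zero_nat
      have h1 : |σ (k n + 1)| = 1 := by
        rcases hσval (k n + 1) with h | h <;> rw [h] <;> norm_num
      show ‖σ (k n + 1) / ((k n : ℝ) + 1)‖ ≤ 1 / ((n : ℝ) + 1)
      rw [Real.norm_eq_abs, abs_div, h1, abs_of_pos (by positivity)]
      apply one_div_le_one_div_of_le (by positivity)
      have := hk.le_apply (x := n)
      have : ((n : ℝ)) ≤ (k n : ℝ) := by exact_mod_cast this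
      linarith
    have h2 : Tendsto (fun n => x (k n + 1)) atTop (nhds (L + 0)) :=
      (hconv.add hdiff).congr (fun n => (hrec (k n)).symm)
    simpa using h2
  · -- part (c)
    rintro ⟨L, hL⟩
    set H : ℕ → ℝ := fun n => ∑ i ∈ Finset.range n, 1 / ((i : ℝ) + 1) with hHdef
    have hHtop : Tendsto H atTop atTop := Real.tendsto_sum_range_one_div_nat_succ_atTop
    have hD1 : ¬ ∃ N, ∀ m, N ≤ m → σ (m + 1) = 1 := by
      rintro ⟨N, hN⟩
      have key : ∀ n, x (N + n) = x N + (H (N + n) - H N) := by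
        intro n
        induction n with
        | zero => simp
        | succ n ih =>
          have hr := hrec (N + n)
          rw [hN (N + n) (by omega)] at hr
          have hHs : H (N + n + 1) = H (N + n) + 1 / (((N + n : ℕ) : ℝ) + 1) :=
            Finset.sum_range_succ _ _
          rw [show N + (n + 1) = (N + n) + 1 from rfl, hr, ih, hHs]
          ring
      obtain ⟨m, hm1, hm2⟩ :=
        ((hHtop.eventually_ge_atTop (H N - x N + 3)).and (eventually_ge_atTop N)).exists
      have hkey := key (m - N)
      rw [Nat.add_sub_cancel' hm2] at hkey
      have := (hbound m).2
      linarith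
    have hD2 : ¬ ∃ N, ∀ m, N ≤ m → σ (m + 1) = -1 := by
      rintro ⟨N, hN⟩
      have key : ∀ n, x (N + n) = x N - (H (N + n) - H N) := by
        intro n
        induction n with
        | zero => simp
        | succ n ih =>
          have hr := hrec (N + n)
          rw [hN (N + n) (by omega)] at hr
          have hHs : H (N + n + 1) = H (N + n) + 1 / (((N + n : ℕ) : ℝ) + 1) :=
            Finset.sum_range_succ _ _
          rw [show N + (n + 1) = (N + n) + 1 from rfl, hr, ih, hHs]
          ring
      obtain ⟨m, hm1, hm2⟩ :=
        ((hHtop.eventually_ge_atTop (H N + x N + 3)).and (eventually_ge_atTop N)).exists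
      have hkey := key (m - N)
      rw [Nat.add_sub_cancel' hm2] at hkey
      have := (hbound m).1
      linarith
    by_cases hL1 : L < 1
    · have hev : ∀ᶠ m in atTop, x m < 1 := hL.eventually (eventually_lt_nhds hL1)
      obtain ⟨N, hN⟩ := eventually_atTop.mp hev
      have hex : ∃ M, max N 1 ≤ M ∧ σ (M + 1) = 1 := by
        by_contra hc
        push_neg at hc
        exact hD2 ⟨max N 1, fun m hm => (hσval (m + 1)).resolve_left (hc m hm)⟩
      obtain ⟨M, hM, hM1⟩ := hex
      have hall : ∀ m, M ≤ m → σ (m + 1) = 1 := by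
        intro m hm
        induction m, hm using Nat.le_induction with
        | base => exact hM1
        | succ m hm ih =>
          rw [hσ (m + 1) (by omega)]
          have hx : x (m + 1) < 1 := hN (m + 1) (by omega)
          split_ifs with h1 h2
          · rfl
          · linarith
          · exact ih
      exact hD1 ⟨M, hall⟩
    · push_neg at hL1
      have hev : ∀ᶠ m in atTop, 0 < x m := hL.eventually (eventually_gt_nhds (by linarith))
      obtain ⟨N, hN⟩ := eventually_atTop.mp hev
      have hex : ∃ M, max N 1 ≤ M ∧ σ (M + 1) = -1 := by
        by_contra hc
        push_neg at hc
        exact hD1 ⟨max N 1, fun m hm => (hσval (m + 1)).resolve_right (hc m hm)⟩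
      obtain ⟨M, hM, hM1⟩ := hex
      have hall : ∀ m, M ≤ m → σ (m + 1) = -1 := by
        intro m hm
        induction m, hm using Nat.le_induction with
        | base => exact hM1
        | succ m hm ih =>
          rw [hσ (m + 1) (by omega)]
          have hx : 0 < x (m + 1) := hN (m + 1) (by omega)
          split_ifs with h1 h2
          · linarith
          · rfl
          · exact ih
      exact hD2 ⟨M, hall⟩
end

section
/- Let $X$ be a metric space, $\{x_k\}\subset X$ a sequence such that every convergent subsequence's shift by one converges to the same limit, and let $\mathcal{U}$ be the set of limit points of $\{x_k\}$. Suppose every subsequence of $\{x_k\}$ has a convergent sub-subsequence. If there exist $u\in\mathcal{U}$ and $\varepsilon>0$ with $\mathcal{U}\not\subset \overline{B(u,\varepsilon)}$, then there exists $v\in\mathcal{U}$ with $d(u,v)=\varepsilon$. -/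
open Filter Topology

/-- The set of limit points (subsequential limits) of a sequence. -/
def limitPoints {X : Type*} [MetricSpace X] (x : ℕ → X) : Set X :=
  {u | ∃ k : ℕ → ℕ, StrictMono k ∧ Tendsto (fun n => x (k n)) atTop (nhds u)}

/-- Sphere-intersection lemma: if every subsequence of `{x_k}` has a convergent
sub-subsequence, shifts of convergent subsequences converge to the same limit, and the
limit set `U` is not contained in the closed ball `B̄(u, ε)` around some limit point `u`,
then `U` meets the sphere of radius `ε` around `u`. -/
theorem limit_set_sphere {X : Type*} [MetricSpace X] (x : ℕ → X)
    (hcpt : ∀ k : ℕ → ℕ, StrictMono k →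
      ∃ (l : ℕ → ℕ) (u : X), StrictMono l ∧
        Tendsto (fun n => x (k (l n))) atTop (nhds u))
    (hshift : ∀ (k : ℕ → ℕ) (u : X), StrictMono k →
      Tendsto (fun n => x (k n)) atTop (nhds u) →
      Tendsto (fun n => x (k n + 1)) atTop (nhds u))
    (u : X) (hu : u ∈ limitPoints x) (ε : ℝ) (hε : 0 < ε)
    (hnot : ¬ limitPoints x ⊆ Metric.closedBall u ε) :
    ∃ v ∈ limitPoints x, dist u v = ε := by
  classical
  obtain ⟨w, hw, hwdist⟩ : ∃ w ∈ limitPoints x, ε < dist w u := by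
    rcases Set.not_subset.1 hnot with ⟨w, hw, hw2⟩
    exact ⟨w, hw, by simpa [Metric.mem_closedBall, not_le] using hw2⟩
  obtain ⟨φ, hφ, hφlim⟩ := hu
  obtain ⟨ψ, hψ, hψlim⟩ := hw
  obtain ⟨N₁, hN₁⟩ := Metric.tendsto_atTop.1 hφlim ε hε
  obtain ⟨N₂, hN₂⟩ := Metric.tendsto_atTop.1 hψlim (dist w u - ε) (by linarith)
  -- crossing indices exist arbitrarily far out
  have hfreq : ∀ N : ℕ, ∃ k ≥ N, dist (x k) u ≤ ε ∧ ε < dist (x (k + 1)) u := by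
    intro N
    set a := φ (max N N₁) with ha
    have haN : N ≤ a := le_trans (le_max_left _ _) hφ.le_apply
    have haε : dist (x a) u ≤ ε := le_of_lt (hN₁ _ (le_max_right _ _))
    set b := ψ (max (a + 1) N₂) with hb
    have hab : a < b := lt_of_lt_of_le (Nat.lt_succ_self a)
      (le_trans (le_max_left _ _) hψ.le_apply)
    have hbε : ε < dist (x b) u := by
      have h1 : dist (x b) w < dist w u - ε := hN₂ _ (le_max_right _ _)
      have h2 : dist w u ≤ dist w (x b) + dist (x b) u := dist_triangle _ _ _
      rw [dist_comm w (x b)] at h2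
      linarith
    set P : ℕ → Prop := fun j => dist (x j) u ≤ ε with hP
    set m := Nat.findGreatest P b with hm
    have ham : a ≤ m := Nat.le_findGreatest hab.le haε
    have hmP : dist (x m) u ≤ ε := by
      rcases Nat.eq_zero_or_pos m with h0 | h0
      · have ha0 : a = 0 := Nat.le_zero.mp (h0 ▸ ham)
        rw [h0, ← ha0]; exact haε
      · exact Nat.findGreatest_of_ne_zero hm.symm h0.ne'
    have hmb : m < b := by
      refine lt_of_le_of_ne (Nat.findGreatest_le b) ?_
      intro h
      rw [h] at hmP
      exact absurd hmP (not_le.2 hbε)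
    have hnext : ¬ P (m + 1) :=
      Nat.findGreatest_is_greatest (hm ▸ Nat.lt_succ_self m) hmb
    exact ⟨m, le_trans haN ham, hmP, lt_of_not_ge hnext⟩
  obtain ⟨k, hk, hkP⟩ := Filter.extraction_of_frequently_atTop
    (Filter.frequently_atTop.2 hfreq)
  obtain ⟨l, v, hl, hlim⟩ := hcpt k hk
  have hshift' : Tendsto (fun n => x (k (l n) + 1)) atTop (nhds v) :=
    hshift (fun n => k (l n)) v (hk.comp hl) hlim
  have hdist1 : Tendsto (fun n => dist (x (k (l n))) u) atTop (nhds (dist v u)) :=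
    hlim.dist tendsto_const_nhds
  have hdist2 : Tendsto (fun n => dist (x (k (l n) + 1)) u) atTop (nhds (dist v u)) :=
    hshift'.dist tendsto_const_nhds
  have hle : dist v u ≤ ε :=
    le_of_tendsto hdist1 (Filter.Eventually.of_forall fun n => (hkP (l n)).1)
  have hge : ε ≤ dist v u :=
    ge_of_tendsto hdist2 (Filter.Eventually.of_forall fun n => (hkP (l n)).2.le)
  refine ⟨v, ⟨fun n => k (l n), hk.comp hl, hlim⟩, ?_⟩
  rw [dist_comm]
  linarith
end

section
/- Under the hypotheses of the previous abstract lemma (sequential compactness of $\{x_k\}$ in a metric space and the shift property for convergent subsequences), the set $\mathcal{U}$ of limit points of $\{x_k\}$ either is a singleton or has no isolated points. -/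
open Filter Topology

lemma limitPoints_frequent {X : Type*} [MetricSpace X] {x : ℕ → X} {u : X}
    (hu : u ∈ limitPoints x) {δ : ℝ} (hδ : 0 < δ) (N : ℕ) :
    ∃ t ≥ N, dist (x t) u < δ := by
  obtain ⟨k, hk, htend⟩ := hu
  obtain ⟨N₀, hN₀⟩ := Metric.tendsto_atTop.mp htend δ hδ
  refine ⟨k (max N N₀), le_trans (le_max_left N N₀) (hk.id_le _), ?_⟩
  exact hN₀ _ (le_max_right N N₀)

lemma key_lemma {X : Type*} [MetricSpace X] (x : ℕ → X)
    (hcpt : ∀ k : ℕ → ℕ, StrictMono k →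
      ∃ (l : ℕ → ℕ) (u : X), StrictMono l ∧
        Tendsto (fun n => x (k (l n))) atTop (nhds u))
    (hshift : ∀ (k : ℕ → ℕ) (u : X), StrictMono k →
      Tendsto (fun n => x (k n)) atTop (nhds u) →
      Tendsto (fun n => x (k n + 1)) atTop (nhds u))
    (u : X) (hu : u ∈ limitPoints x) (ε : ℝ) (hε : 0 < ε)
    (hiso : Metric.closedBall u ε ∩ limitPoints x = {u})
    (v : X) (hv : v ∈ limitPoints x) : v = u := by
  by_contra hne
  have hvball : v ∉ Metric.closedBall u ε := by
    intro hb
    exact hne (by rw [← Set.mem_singleton_iff, ← hiso]; exact ⟨hb, hv⟩)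
  have hdv : ε < dist v u := by simpa [Metric.mem_closedBall] using hvball
  set δ := ε / 2 with hδdef
  have hδ : 0 < δ := by positivity
  -- infinitely often far from u
  have h2 : ∀ N, ∃ s ≥ N, δ ≤ dist (x s) u := by
    intro N
    have hη : 0 < dist v u - δ := by
      have : δ < ε := by simp [hδdef]; linarith
      linarith
    obtain ⟨s, hs, hsd⟩ := limitPoints_frequent hv hη N
    refine ⟨s, hs, ?_⟩
    have := dist_triangle v (x s) u
    have h' : dist v (x s) = dist (x s) v := dist_comm _ _
    nlinarith [dist_comm (x s) v, dist_triangle v (x s) u]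
  -- the set of "last exit" times
  set S : Set ℕ := {m | dist (x m) u < δ ∧ δ ≤ dist (x (m + 1)) u} with hSdef
  have hSinf : S.Infinite := by
    apply Set.infinite_of_not_bddAbove
    rintro ⟨N, hN⟩
    obtain ⟨t, ht, htd⟩ := limitPoints_frequent hu hδ (N + 1)
    obtain ⟨s, hs, hsd⟩ := h2 (t + 1)
    -- find a last-exit time in [t, s)
    have hQ : ∃ j, δ ≤ dist (x (t + j)) u := ⟨s - t, by
      have : t + (s - t) = s := by omega
      rw [this]; exact hsd⟩
    classical
    set c := Nat.find hQ with hc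
    have hQc : δ ≤ dist (x (t + c)) u := Nat.find_spec hQ
    have hc0 : c ≠ 0 := by
      intro h0
      rw [h0] at hQc
      simp at hQc
      linarith
    have hmlt : ¬ δ ≤ dist (x (t + (c - 1))) u := Nat.find_min hQ (by omega)
    have hmem : t + (c - 1) ∈ S := by
      constructor
      · exact lt_of_not_ge hmlt
      · have : t + (c - 1) + 1 = t + c := by omega
        rw [this]; exact hQc
    have := hN hmem
    omega
  -- extract a convergent subsequence from S
  set k : ℕ → ℕ := Nat.nth S with hkdef
  have hkmono : StrictMono k := Nat.nth_strictMono hSinf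
  have hkmem : ∀ n, k n ∈ S := fun n => Nat.nth_mem_of_infinite hSinf n
  obtain ⟨l, w, hl, hwt⟩ := hcpt k hkmono
  have hwlp : w ∈ limitPoints x := ⟨k ∘ l, hkmono.comp hl, hwt⟩
  have hwd : dist w u ≤ δ := by
    have htd : Tendsto (fun n => dist (x (k (l n))) u) atTop (nhds (dist w u)) :=
      (continuous_dist.comp₂ continuous_id continuous_const).continuousAt.tendsto.comp hwt
    exact le_of_tendsto htd (Eventually.of_forall fun n => (hkmem (l n)).1.le)
  have hwu : w = u := by
    rw [← Set.mem_singleton_iff, ← hiso]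
    exact ⟨by rw [Metric.mem_closedBall]; linarith, hwlp⟩
  rw [hwu] at hwt
  have hsh := hshift (k ∘ l) u (hkmono.comp hl) hwt
  obtain ⟨N₀, hN₀⟩ := Metric.tendsto_atTop.mp hsh δ hδ
  have := hN₀ N₀ le_rfl
  have := (hkmem (l N₀)).2
  exact absurd ‹dist (x ((k ∘ l) N₀ + 1)) u < δ› (not_lt.mpr (hkmem (l N₀)).2)

/-- Under sequential compactness and the shift property, the set of limit points of
`{x_k}` either is a singleton or has no isolated points (where `u` is isolated in `U`
iff `B̄(u,ε) ∩ U = {u}` for some `ε > 0`). -/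
theorem limit_set_singleton_or_no_isolated {X : Type*} [MetricSpace X] (x : ℕ → X)
    (hcpt : ∀ k : ℕ → ℕ, StrictMono k →
      ∃ (l : ℕ → ℕ) (u : X), StrictMono l ∧
        Tendsto (fun n => x (k (l n))) atTop (nhds u))
    (hshift : ∀ (k : ℕ → ℕ) (u : X), StrictMono k →
      Tendsto (fun n => x (k n)) atTop (nhds u) →
      Tendsto (fun n => x (k n + 1)) atTop (nhds u)) :
    (∃ u, limitPoints x = {u}) ∨
      (∀ u ∈ limitPoints x,
        ¬ ∃ ε > (0:ℝ), Metric.closedBall u ε ∩ limitPoints x = {u}) := by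
  by_cases h : ∃ u ∈ limitPoints x, ∃ ε > (0:ℝ),
      Metric.closedBall u ε ∩ limitPoints x = {u}
  · obtain ⟨u, hu, ε, hε, hiso⟩ := h
    left
    refine ⟨u, Set.eq_singleton_iff_unique_mem.mpr ⟨hu, fun v hv => ?_⟩⟩
    exact key_lemma x hcpt hshift u hu ε hε hiso v hv
  · right
    push_neg at h
    intro u hu ⟨ε, hε, hiso⟩
    exact absurd hiso (h u hu ε hε)
end
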